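/- arXiv:1602.00520 — 7 statements merged into one kernel-verified Lean document; each statement's English description precedes it below -/
import Mathlib

section
/- Under assumptions (R1)-(R4) and the Bregman scaling condition with exponent θ ∈ [0,1), the symmetric Bregman distance satisfies D(u^δ_α, u†) ≤ inf over (ζ1,ζ2) ∈ (0,∞)² of [ (ζ1 + (δ/α)ζ2)^{1/(1−θ)} C_θ(u^δ_α, u†)^{1/(1−θ)} + (1/(1−θ)) e_{α,ζ1}(μ†) + (δ/(α(1−θ))) e_{δ,ζ2}(η) ]. -/
/-!
Testing the optimality condition with `e = u^δ_α - u†` gives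
`α D = δ n(Ke) - ‖Ke‖² - α μ†(e)`. Fenchel–Young for `R*` at `e` and at `-e` (where `R(-e) = R(e)`),
followed by minimizing over `w`, yields `e_{α,ζ₁}(μ†) ≥ -μ†(e) - ‖Ke‖²/(2α) - ζ₁ R(e)` and
`e_{δ,ζ₂}(η) ≥ n(Ke) - ‖Ke‖²/(2δ) - ζ₂ R(e)`, hence `D ≤ e_{α,ζ₁}(μ†) + (δ/α) e_{δ,ζ₂}(η) + Λ R(e)`
with `Λ = ζ₁ + (δ/α) ζ₂`. The scaling condition `R(e) ≤ C D^θ` and Young's inequality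
`Λ C D^θ ≤ (1-θ) (Λ C)^{1/(1-θ)} + θ D` absorb the last term. If `R(u†) = -∞`, then `R* ≡ +∞` and
the right-hand side is `+∞`.
-/

open scoped RealInnerProductSpace

/-- The variational functional `J^δ_α(u) = ½‖Ku‖²_Y − ⟨Ku, f^δ⟩_{Z×Z*} + α R(u)`
with `f^δ = Ku† + δn`, the pairing of `Ku` with `Ku† ∈ Z ⊂ Y ⊂ Z*` being the
`Y`-inner product (`Z` embedded in `Y` via `j`), and `n ∈ Z*`. -/
noncomputable def Jfun {X Y Z : Type*} [NormedAddCommGroup X] [NormedSpace ℝ X]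
    [NormedAddCommGroup Y] [InnerProductSpace ℝ Y]
    [NormedAddCommGroup Z] [NormedSpace ℝ Z]
    (j : Z →L[ℝ] Y) (K : X →L[ℝ] Z) (R : X → EReal)
    (udag : X) (n : Z →L[ℝ] ℝ) (δ α : ℝ) (u : X) : EReal :=
  (((1 : ℝ) / 2 * ‖j (K u)‖ ^ 2 - (⟪j (K u), j (K udag)⟫ + δ * n (K u)) : ℝ) : EReal)
    + (α : EReal) * R u

/-- The convex conjugate `R*(q) = sup_u (⟨q,u⟩ − R(u))`, valued in `EReal`. -/
noncomputable def conjR {X : Type*} [NormedAddCommGroup X] [NormedSpace ℝ X]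
    (R : X → EReal) (q : X →L[ℝ] ℝ) : EReal :=
  ⨆ u : X, ((q u : EReal) - R u)

/-- `K* w ∈ X*` for `w ∈ Y`: the functional `u ↦ ⟪w, (j ∘ K) u⟫_Y`. -/
noncomputable def KstarY {X Y Z : Type*} [NormedAddCommGroup X] [NormedSpace ℝ X]
    [NormedAddCommGroup Y] [InnerProductSpace ℝ Y]
    [NormedAddCommGroup Z] [NormedSpace ℝ Z]
    (j : Z →L[ℝ] Y) (K : X →L[ℝ] Z) (w : Y) : X →L[ℝ] ℝ :=
  (innerSL ℝ w).comp (j.comp K)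

/-- The approximate-source-condition functional
`e_{α,ζ}(ϑ) = inf_{w ∈ Y} [ζ R*((K*w − ϑ)/ζ) + (α/2)‖w‖²_Y]`. -/
noncomputable def efun {X Y Z : Type*} [NormedAddCommGroup X] [NormedSpace ℝ X]
    [NormedAddCommGroup Y] [InnerProductSpace ℝ Y]
    [NormedAddCommGroup Z] [NormedSpace ℝ Z]
    (j : Z →L[ℝ] Y) (K : X →L[ℝ] Z) (R : X → EReal)
    (α ζ : ℝ) (ϑ : X →L[ℝ] ℝ) : EReal :=
  ⨅ w : Y, ((ζ : EReal) * conjR R (ζ⁻¹ • (KstarY j K w - ϑ))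
    + ((α / 2 * ‖w‖ ^ 2 : ℝ) : EReal))

section Subgradient

variable {X : Type*} [NormedAddCommGroup X] [NormedSpace ℝ X] {R : X → EReal}

def IsSubgradient (R : X → EReal) (u : X) (μ : X →L[ℝ] ℝ) : Prop :=
  ∀ v, R u + ((μ (v - u) : ℝ) : EReal) ≤ R v

theorem IsSubgradient.ne_top {u v : X} {μ : X →L[ℝ] ℝ} (hμ : IsSubgradient R u μ)
    (hv : R v ≠ ⊤) : R u ≠ ⊤ := by
  intro hu
  have := hμ v
  rw [hu, EReal.top_add_of_ne_bot (EReal.coe_ne_bot _), top_le_iff] at this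
  exact hv this

theorem IsSubgradient.bregman_nonneg {u v : X} {μu μv : X →L[ℝ] ℝ}
    (hμu : IsSubgradient R u μu) (hμv : IsSubgradient R v μv) (hv_bot : R v ≠ ⊥)
    (hv_top : R v ≠ ⊤) : 0 ≤ (μu - μv) (u - v) := by
  have hu_top : R u ≠ ⊤ := hμu.ne_top hv_top
  have huv := hμu v
  have hvu := hμv u
  lift R v to ℝ using ⟨hv_top, hv_bot⟩ with b
  have hu_bot : R u ≠ ⊥ := fun h => by
    rw [h, le_bot_iff, ← EReal.coe_add] at hvu
    exact EReal.coe_ne_bot _ hvu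
  lift R u to ℝ using ⟨hu_top, hu_bot⟩ with a
  have h1 : b + μv (u - v) ≤ a := by exact_mod_cast hvu
  have h2 : a + μu (v - u) ≤ b := by exact_mod_cast huv
  rw [← neg_sub u v, map_neg] at h2
  rw [sub_apply]
  linarith

theorem le_conjR (q : X →L[ℝ] ℝ) (u : X) : (q u : EReal) - R u ≤ conjR R q :=
  le_iSup (fun u => (q u : EReal) - R u) u

theorem conjR_eq_top_of_eq_bot {u : X} (hu : R u = ⊥) (q : X →L[ℝ] ℝ) : conjR R q = ⊤ :=
  top_le_iff.mp <| by simpa [hu] using le_conjR (R := R) q u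

end Subgradient

section SourceCondition

variable {X Y Z : Type*} [NormedAddCommGroup X] [NormedSpace ℝ X]
  [NormedAddCommGroup Y] [InnerProductSpace ℝ Y] [NormedAddCommGroup Z] [NormedSpace ℝ Z]
  {j : Z →L[ℝ] Y} {K : X →L[ℝ] Z} {R : X → EReal}

theorem efun_eq_top_of_eq_bot {u : X} (hu : R u = ⊥) {c ζ : ℝ} (hζ : 0 < ζ)
    (ϑ : X →L[ℝ] ℝ) : efun j K R c ζ ϑ = ⊤ := by
  refine top_le_iff.mp (le_iInf fun w => ?_)
  rw [conjR_eq_top_of_eq_bot hu, EReal.coe_mul_top_of_pos hζ,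
    EReal.top_add_of_ne_bot (EReal.coe_ne_bot _)]

/-- Fenchel–Young at `u`, followed by minimizing `⟪w, Ku⟫ + (c/2)‖w‖²` over `w`. -/
theorem le_efun {u : X} {ρ : ℝ} (hu : R u ≤ ρ) {c ζ : ℝ} (hc : 0 < c) (hζ : 0 < ζ)
    (ϑ : X →L[ℝ] ℝ) :
    ((-ϑ u - ‖j (K u)‖ ^ 2 / (2 * c) - ζ * ρ : ℝ) : EReal) ≤ efun j K R c ζ ϑ := by
  refine le_iInf fun w => ?_
  set g := j (K u)
  have hconj : ((ζ⁻¹ * (⟪w, g⟫ - ϑ u) - ρ : ℝ) : EReal)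
      ≤ conjR R (ζ⁻¹ • (KstarY j K w - ϑ)) :=
    calc ((ζ⁻¹ * (⟪w, g⟫ - ϑ u) - ρ : ℝ) : EReal)
        = (((ζ⁻¹ • (KstarY j K w - ϑ)) u : ℝ) : EReal) - (ρ : EReal) := by
          rw [← EReal.coe_sub]; rfl
      _ ≤ _ := (EReal.sub_le_sub le_rfl hu).trans (le_conjR _ u)
  have hquad : -(‖g‖ ^ 2 / (2 * c)) ≤ ⟪w, g⟫ + c / 2 * ‖w‖ ^ 2 := by
    have hsq : 0 ≤ (c * ‖w‖ - ‖g‖) ^ 2 / (2 * c) := by positivity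
    have hCS := neg_le_of_abs_le (abs_real_inner_le_norm w g)
    have hexp : (c * ‖w‖ - ‖g‖) ^ 2 / (2 * c)
        = c / 2 * ‖w‖ ^ 2 - ‖w‖ * ‖g‖ + ‖g‖ ^ 2 / (2 * c) := by
      field_simp; ring
    linarith
  calc ((-ϑ u - ‖g‖ ^ 2 / (2 * c) - ζ * ρ : ℝ) : EReal)
      ≤ ((ζ * (ζ⁻¹ * (⟪w, g⟫ - ϑ u) - ρ) + c / 2 * ‖w‖ ^ 2 : ℝ) : EReal) := by
        rw [EReal.coe_le_coe_iff, mul_sub, ← mul_assoc, mul_inv_cancel₀ hζ.ne', one_mul]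
        linarith
    _ ≤ _ := by
        rw [EReal.coe_add, EReal.coe_mul]
        gcongr

end SourceCondition

theorem Real.mul_rpow_le_one_sub_mul_rpow_add_mul {a d θ : ℝ} (ha : 0 ≤ a) (hd : 0 ≤ d)
    (hθ0 : 0 ≤ θ) (hθ1 : θ < 1) :
    a * d ^ θ ≤ (1 - θ) * a ^ (1 / (1 - θ)) + θ * d := by
  have h1θ : 0 < 1 - θ := by linarith
  have h := Real.geom_mean_le_arith_mean2_weighted h1θ.le hθ0
    (Real.rpow_nonneg ha (1 / (1 - θ))) hd (by ring)
  rwa [← Real.rpow_mul ha, one_div_mul_cancel h1θ.ne', Real.rpow_one] at h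

theorem bregman_bound_of_optimality {α δ ζ1 ζ2 θ C d m ν G : ℝ} (hα : 0 < α) (hδ : 0 < δ)
    (hζ1 : 0 < ζ1) (hζ2 : 0 < ζ2) (hθ0 : 0 ≤ θ) (hθ1 : θ < 1) (hC : 0 ≤ C) (hd : 0 ≤ d)
    (hopt : α * d = δ * ν - G - α * m) :
    d ≤ (ζ1 + δ / α * ζ2) ^ (1 / (1 - θ)) * C ^ (1 / (1 - θ))
      + 1 / (1 - θ) * (-m - G / (2 * α) - ζ1 * (C * d ^ θ))
      + δ / (α * (1 - θ)) * (ν - G / (2 * δ) - ζ2 * (C * d ^ θ)) := by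
  set Λ := ζ1 + δ / α * ζ2
  have h1θ : 0 < 1 - θ := by linarith
  have hyoung := Real.mul_rpow_le_one_sub_mul_rpow_add_mul
    (mul_nonneg (by positivity : 0 ≤ Λ) hC) hd hθ0 hθ1
  have hsum : -m - G / (2 * α) - ζ1 * (C * d ^ θ) + δ / α * (ν - G / (2 * δ) - ζ2 * (C * d ^ θ))
      = d - Λ * C * d ^ θ := by
    simp only [Λ]
    field_simp
    linear_combination -2 * hopt
  calc d ≤ (Λ * C) ^ (1 / (1 - θ)) + (d - Λ * C * d ^ θ) / (1 - θ) := by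
        rw [← sub_le_iff_le_add', le_div_iff₀ h1θ]
        linear_combination hyoung
    _ = _ := by
        rw [← hsum, Real.mul_rpow (by positivity) hC]
        field_simp
        ring

theorem stmt5_general
    {X Y Z : Type*}
    [NormedAddCommGroup X] [NormedSpace ℝ X]
    [NormedAddCommGroup Y] [InnerProductSpace ℝ Y]
    [NormedAddCommGroup Z] [NormedSpace ℝ Z]
    (j : Z →L[ℝ] Y)
    (K : X →L[ℝ] Z)
    (R : X → EReal)
    -- (R4): symmetry
    (hR4 : ∀ u : X, R (-u) = R u)
    (udag : X) (n : Z →L[ℝ] ℝ) (δ α : ℝ) (hδ : 0 < δ) (hα : 0 < α)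
    -- `μ† ∈ ∂R(u†)`
    (μdag : X →L[ℝ] ℝ)
    (hμdag : ∀ v : X, R udag + ((μdag (v - udag) : ℝ) : EReal) ≤ R v)
    -- `u^δ_α` is a minimizer of `J^δ_α` and `μ^δ_α ∈ ∂R(u^δ_α)` satisfies the
    -- optimality condition `K*(K u^δ_α − f^δ) + α μ^δ_α = 0`
    (uδα : X) (μδα : X →L[ℝ] ℝ)
    (hsub : ∀ v : X, R uδα + ((μδα (v - uδα) : ℝ) : EReal) ≤ R v)
    (hopt : ∀ u : X,
      ⟪j (K u), j (K uδα) - j (K udag)⟫ - δ * n (K u) + α * μδα u = 0)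
    -- Bregman scaling condition with exponent `θ ∈ [0,1)`
    (θ : ℝ) (hθ0 : 0 ≤ θ) (hθ1 : θ < 1)
    (Cθ : X → X → ℝ) (hCθ : ∀ u v : X, 0 ≤ Cθ u v)
    (hscal : ∀ (u v : X) (μu μv : X →L[ℝ] ℝ),
      (∀ x : X, R u + ((μu (x - u) : ℝ) : EReal) ≤ R x) →
      (∀ x : X, R v + ((μv (x - v) : ℝ) : EReal) ≤ R x) →
      R (u - v) ≤ ((Cθ u v * ((μu - μv) (u - v)) ^ θ : ℝ) : EReal)) :
    ((((μδα - μdag) (uδα - udag)) : ℝ) : EReal)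
      ≤ ⨅ (ζ1 : ℝ) (_ : 0 < ζ1) (ζ2 : ℝ) (_ : 0 < ζ2),
          (((ζ1 + δ / α * ζ2) ^ ((1:ℝ) / (1 - θ))
              * Cθ uδα udag ^ ((1:ℝ) / (1 - θ)) : ℝ) : EReal)
            + ((1 / (1 - θ) : ℝ) : EReal) * efun j K R α ζ1 μdag
            + ((δ / (α * (1 - θ)) : ℝ) : EReal) * efun j K R δ ζ2 (n.comp K) := by
  refine le_iInf₂ fun ζ1 hζ1 => le_iInf₂ fun ζ2 hζ2 => ?_
  by_cases hbot : R udag = ⊥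
  · have h1θ : 0 < 1 - θ := by linarith
    rw [efun_eq_top_of_eq_bot hbot hζ1, efun_eq_top_of_eq_bot hbot hζ2,
      EReal.coe_mul_top_of_pos (by positivity), EReal.coe_mul_top_of_pos (by positivity),
      EReal.add_top_of_ne_bot (EReal.coe_ne_bot _), EReal.top_add_of_ne_bot (by simp)]
    exact le_top
  set e := uδα - udag
  set d := (μδα - μdag) e
  have hRe : R e ≤ (Cθ uδα udag * d ^ θ : ℝ) := hscal uδα udag μδα μdag hsub hμdag
  have hd : 0 ≤ d := IsSubgradient.bregman_nonneg hsub hμdag hbot <|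
    IsSubgradient.ne_top hμdag (ne_top_of_le_ne_top (EReal.coe_ne_top _) hRe)
  have hE1 := le_efun (j := j) (K := K) hRe hα hζ1 μdag
  have hE2 := le_efun (j := j) (K := K) (u := -e) (hR4 e ▸ hRe) hδ hζ2 (n.comp K)
  simp only [map_neg, norm_neg, ContinuousLinearMap.comp_apply, neg_neg] at hE2
  have hd_eq : α * d = δ * n (K e) - ‖j (K e)‖ ^ 2 - α * μdag e := by
    have h := hopt e
    rw [← map_sub, ← map_sub, real_inner_self_eq_norm_sq] at h
    simp only [d, sub_apply]
    linarith
  calc ((d : ℝ) : EReal) ≤ _ := EReal.coe_le_coe_iff.mpr <|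
        bregman_bound_of_optimality hα hδ hζ1 hζ2 hθ0 hθ1 (hCθ uδα udag) hd hd_eq
    _ ≤ _ := by
      simp only [EReal.coe_add, EReal.coe_mul]
      gcongr

/-- Theorem 2.9 (case `θ < 1`): under (R1)-(R4) and the Bregman scaling condition
`R(u−v) ≤ C_θ(u,v) D(u,v)^θ` with `θ ∈ [0,1)`, the symmetric Bregman distance satisfies
`D(u^δ_α,u†) ≤ inf_{ζ1,ζ2 > 0} [(ζ1 + (δ/α)ζ2)^{1/(1−θ)} C_θ(u^δ_α,u†)^{1/(1−θ)}
  + (1/(1−θ)) e_{α,ζ1}(μ†) + (δ/(α(1−θ))) e_{δ,ζ2}(η)]`. -/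
theorem stmt5
    {X Y Z : Type*}
    [NormedAddCommGroup X] [NormedSpace ℝ X] [CompleteSpace X]
    [TopologicalSpace.SeparableSpace X]
    [NormedAddCommGroup Y] [InnerProductSpace ℝ Y] [CompleteSpace Y]
    [NormedAddCommGroup Z] [NormedSpace ℝ Z]
    (j : Z →L[ℝ] Y) (hjinj : Function.Injective j) (hjdense : DenseRange j)
    (K : X →L[ℝ] Z)
    (R : X → EReal)
    -- convexity of `R`
    (hRconv : ∀ u v : X, ∀ t : ℝ, 0 ≤ t → t ≤ 1 →
      R (t • u + (1 - t) • v) ≤ (t : EReal) * R u + ((1 - t : ℝ) : EReal) * R v)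
    -- (R1)+(R2): there is a topology `τ` on `X` in which `K` is continuous, `R` is
    -- sequentially lower semicontinuous, and sublevel sets of `R` are sequentially compact
    (hR12 : ∃ τ : TopologicalSpace X,
      (@Continuous X Z τ _ fun u => K u) ∧
      (∀ (u : ℕ → X) (x : X),
        Filter.Tendsto u Filter.atTop (@nhds X τ x) →
        R x ≤ Filter.liminf (fun k => R (u k)) Filter.atTop) ∧
      (∀ ρ : ℝ, @IsSeqCompact X τ {u : X | R u ≤ (ρ : EReal)}))
    -- (R3): the convex conjugate `R*` is finite on a ball around `0` in `X*`
    (hR3 : ∃ ε : ℝ, 0 < ε ∧ ∀ q : X →L[ℝ] ℝ, ‖q‖ ≤ ε → conjR R q < ⊤)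
    -- (R4): symmetry
    (hR4 : ∀ u : X, R (-u) = R u)
    (udag : X) (n : Z →L[ℝ] ℝ) (δ α : ℝ) (hδ : 0 < δ) (hα : 0 < α)
    -- `μ† ∈ ∂R(u†)`
    (μdag : X →L[ℝ] ℝ)
    (hμdag : ∀ v : X, R udag + ((μdag (v - udag) : ℝ) : EReal) ≤ R v)
    -- `u^δ_α` is a minimizer of `J^δ_α` and `μ^δ_α ∈ ∂R(u^δ_α)` satisfies the
    -- optimality condition `K*(K u^δ_α − f^δ) + α μ^δ_α = 0`
    (uδα : X) (μδα : X →L[ℝ] ℝ)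
    (hmin : ∀ u : X, Jfun j K R udag n δ α uδα ≤ Jfun j K R udag n δ α u)
    (hsub : ∀ v : X, R uδα + ((μδα (v - uδα) : ℝ) : EReal) ≤ R v)
    (hopt : ∀ u : X,
      ⟪j (K u), j (K uδα) - j (K udag)⟫ - δ * n (K u) + α * μδα u = 0)
    -- Bregman scaling condition with exponent `θ ∈ [0,1)`
    (θ : ℝ) (hθ0 : 0 ≤ θ) (hθ1 : θ < 1)
    (Cθ : X → X → ℝ) (hCθ : ∀ u v : X, 0 ≤ Cθ u v)
    (hscal : ∀ (u v : X) (μu μv : X →L[ℝ] ℝ),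
      (∀ x : X, R u + ((μu (x - u) : ℝ) : EReal) ≤ R x) →
      (∀ x : X, R v + ((μv (x - v) : ℝ) : EReal) ≤ R x) →
      R (u - v) ≤ ((Cθ u v * ((μu - μv) (u - v)) ^ θ : ℝ) : EReal)) :
    ((((μδα - μdag) (uδα - udag)) : ℝ) : EReal)
      ≤ ⨅ (ζ1 : ℝ) (_ : 0 < ζ1) (ζ2 : ℝ) (_ : 0 < ζ2),
          (((ζ1 + δ / α * ζ2) ^ ((1:ℝ) / (1 - θ))
              * Cθ uδα udag ^ ((1:ℝ) / (1 - θ)) : ℝ) : EReal)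
            + ((1 / (1 - θ) : ℝ) : EReal) * efun j K R α ζ1 μdag
            + ((δ / (α * (1 - θ)) : ℝ) : EReal) * efun j K R δ ζ2 (n.comp K) :=
  stmt5_general j K R hR4 udag n δ α hδ hα μdag hμdag uδα μδα hsub hopt θ hθ0 hθ1 Cθ hCθ hscal
end

section
/- Under assumptions (R1)-(R4) and the Bregman scaling condition with exponent θ = 1, the symmetric Bregman distance satisfies D(u^δ_α, u†) ≤ inf over (ζ1,ζ2) ∈ Σ of [ ( e_{α,ζ1}(μ†) + (δ/α) e_{δ,ζ2}(η) ) / ( 1 − (ζ1 + (δ/α)ζ2) C_1(u^δ_α, u†) ) ], where Σ = { (ζ1,ζ2) ∈ (0,∞)² : (ζ1 + (δ/α)ζ2) C_1(u^δ_α, u†) < 1 }. -/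
/-!
Write `e = u^δ_α − u†`, `D = ⟨μ^δ_α − μ†, e⟩` and `C = C_1(u^δ_α, u†)`. The Fenchel–Young
inequality `ζ R*(q/ζ) ≥ q(u) − ζ R(u)`, tested at `u = e` for `e_{α,ζ1}(μ†)` and at `u = −e` for
`e_{δ,ζ2}(η)`, together with completing the square in `w`, bounds each functional below by an
expression in `‖Ke‖²`, `μ†(e)`, `n(Ke)` and `R(±e)`. By the symmetry (R4) and the scaling condition
both `R`-terms are at most `C D`, and after weighting the second bound by `δ/α` the optimality
condition collapses the remaining terms to `D`, so that
`(1 − (ζ1 + (δ/α) ζ2) C) D ≤ e_{α,ζ1}(μ†) + (δ/α) e_{δ,ζ2}(η)`.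
-/

open scoped RealInnerProductSpace

section Conjugate

variable {X : Type*} [NormedAddCommGroup X] [NormedSpace ℝ X] {R : X → EReal}

theorem coe_sub_le_conjR (q : X →L[ℝ] ℝ) {u : X} {ρ : ℝ} (hu : R u ≤ ρ) :
    ((q u - ρ : ℝ) : EReal) ≤ conjR R q :=
  calc ((q u - ρ : ℝ) : EReal) = (q u : EReal) - ρ := EReal.coe_sub _ _
    _ ≤ (q u : EReal) - R u := EReal.sub_le_sub le_rfl hu
    _ ≤ conjR R q := le_iSup (fun v => (q v : EReal) - R v) u

theorem coe_sub_mul_le_mul_conjR_inv_smul (q : X →L[ℝ] ℝ) {u : X} {ζ ρ : ℝ} (hζ : 0 < ζ)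
    (hu : R u ≤ ρ) : ((q u - ζ * ρ : ℝ) : EReal) ≤ ζ * conjR R (ζ⁻¹ • q) :=
  calc ((q u - ζ * ρ : ℝ) : EReal) = ζ * (((ζ⁻¹ • q) u - ρ : ℝ) : EReal) := by
        rw [← EReal.coe_mul, smul_apply, smul_eq_mul, mul_sub,
          mul_inv_cancel_left₀ hζ.ne']
    _ ≤ ζ * conjR R (ζ⁻¹ • q) :=
        mul_le_mul_of_nonneg_left (coe_sub_le_conjR _ hu) (by exact_mod_cast hζ.le)

end Conjugate

theorem neg_norm_sq_div_le_inner_add {E : Type*} [NormedAddCommGroup E]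
    [InnerProductSpace ℝ E] {β : ℝ} (hβ : 0 < β) (w s : E) :
    -(‖s‖ ^ 2 / (2 * β)) ≤ ⟪w, s⟫ + β / 2 * ‖w‖ ^ 2 := by
  have hsq : 0 ≤ ‖β • w + s‖ ^ 2 := sq_nonneg _
  rw [norm_add_sq_real, norm_smul, real_inner_smul_left, Real.norm_of_nonneg hβ.le] at hsq
  have hsquare : ⟪w, s⟫ + β / 2 * ‖w‖ ^ 2 + ‖s‖ ^ 2 / (2 * β)
      = ((β * ‖w‖) ^ 2 + 2 * (β * ⟪w, s⟫) + ‖s‖ ^ 2) / (2 * β) := by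
    field_simp
    ring
  rw [neg_le_iff_add_nonneg, hsquare]
  positivity

theorem EReal.coe_le_inv_mul_of_coe_mul_le {c x : ℝ} {y : EReal} (hc : 0 < c)
    (h : ((c * x : ℝ) : EReal) ≤ y) : (x : EReal) ≤ ((c⁻¹ : ℝ) : EReal) * y :=
  calc (x : EReal) = ((c⁻¹ : ℝ) : EReal) * ((c * x : ℝ) : EReal) := by
        rw [← EReal.coe_mul, inv_mul_cancel_left₀ hc.ne']
    _ ≤ ((c⁻¹ : ℝ) : EReal) * y :=
        mul_le_mul_of_nonneg_left h (by exact_mod_cast (inv_pos.2 hc).le)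

theorem coe_le_efun_of_le {X Y Z : Type*} [NormedAddCommGroup X] [NormedSpace ℝ X]
    [NormedAddCommGroup Y] [InnerProductSpace ℝ Y] [NormedAddCommGroup Z] [NormedSpace ℝ Z]
    (j : Z →L[ℝ] Y) (K : X →L[ℝ] Z) (R : X → EReal) {β ζ : ℝ} (hβ : 0 < β)
    (hζ : 0 < ζ) (ϑ : X →L[ℝ] ℝ) {u : X} {ρ : ℝ} (hu : R u ≤ ρ) :
    ((-(‖j (K u)‖ ^ 2 / (2 * β)) - ϑ u - ζ * ρ : ℝ) : EReal) ≤ efun j K R β ζ ϑ := by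
  refine le_iInf fun w => ?_
  have hKstar : (KstarY j K w - ϑ) u = ⟪w, j (K u)⟫ - ϑ u := rfl
  calc ((-(‖j (K u)‖ ^ 2 / (2 * β)) - ϑ u - ζ * ρ : ℝ) : EReal)
      ≤ (((KstarY j K w - ϑ) u - ζ * ρ + β / 2 * ‖w‖ ^ 2 : ℝ) : EReal) := by
        rw [EReal.coe_le_coe_iff, hKstar]
        linarith [neg_norm_sq_div_le_inner_add hβ w (j (K u))]
    _ ≤ ζ * conjR R (ζ⁻¹ • (KstarY j K w - ϑ))
          + ((β / 2 * ‖w‖ ^ 2 : ℝ) : EReal) := by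
        rw [EReal.coe_add]
        exact add_le_add (coe_sub_mul_le_mul_conjR_inv_smul _ hζ hu) le_rfl

theorem stmt6_general
    {X Y Z : Type*}
    [NormedAddCommGroup X] [NormedSpace ℝ X]
    [NormedAddCommGroup Y] [InnerProductSpace ℝ Y]
    [NormedAddCommGroup Z] [NormedSpace ℝ Z]
    (j : Z →L[ℝ] Y)
    (K : X →L[ℝ] Z)
    (R : X → EReal)
    -- (R4): symmetry
    (hR4 : ∀ u : X, R (-u) = R u)
    (udag : X) (n : Z →L[ℝ] ℝ) (δ α : ℝ) (hδ : 0 < δ) (hα : 0 < α)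
    -- `μ† ∈ ∂R(u†)`
    (μdag : X →L[ℝ] ℝ)
    (hμdag : ∀ v : X, R udag + ((μdag (v - udag) : ℝ) : EReal) ≤ R v)
    -- `u^δ_α` is a minimizer of `J^δ_α` and `μ^δ_α ∈ ∂R(u^δ_α)` satisfies the
    -- optimality condition `K*(K u^δ_α − f^δ) + α μ^δ_α = 0`
    (uδα : X) (μδα : X →L[ℝ] ℝ)
    (hsub : ∀ v : X, R uδα + ((μδα (v - uδα) : ℝ) : EReal) ≤ R v)
    (hopt : ∀ u : X,
      ⟪j (K u), j (K uδα) - j (K udag)⟫ - δ * n (K u) + α * μδα u = 0)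
    -- Bregman scaling condition with exponent `θ = 1`
    (C1 : X → X → ℝ)
    (hscal : ∀ (u v : X) (μu μv : X →L[ℝ] ℝ),
      (∀ x : X, R u + ((μu (x - u) : ℝ) : EReal) ≤ R x) →
      (∀ x : X, R v + ((μv (x - v) : ℝ) : EReal) ≤ R x) →
      R (u - v) ≤ ((C1 u v * ((μu - μv) (u - v)) : ℝ) : EReal)) :
    ((((μδα - μdag) (uδα - udag)) : ℝ) : EReal)
      ≤ ⨅ (ζ1 : ℝ) (_ : 0 < ζ1) (ζ2 : ℝ) (_ : 0 < ζ2)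
          (_ : (ζ1 + δ / α * ζ2) * C1 uδα udag < 1),
          (((1 - (ζ1 + δ / α * ζ2) * C1 uδα udag)⁻¹ : ℝ) : EReal)
            * (efun j K R α ζ1 μdag
              + ((δ / α : ℝ) : EReal) * efun j K R δ ζ2 (n.comp K)) := by
  refine le_iInf fun ζ1 => le_iInf fun hζ1 => le_iInf fun ζ2 => le_iInf fun hζ2 =>
    le_iInf fun hsmall => ?_
  set e := uδα - udag
  set C := C1 uδα udag
  have hscale : R e ≤ ((C * (μδα - μdag) e : ℝ) : EReal) :=
    hscal uδα udag μδα μdag hsub hμdag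
  have he1 := coe_le_efun_of_le j K R hα hζ1 μdag hscale
  have he2 := coe_le_efun_of_le j K R hδ hζ2 (n.comp K) (u := -e) (by rwa [hR4])
  have hbal : ‖j (K e)‖ ^ 2 - δ * n (K e) + α * μδα e = 0 := by
    have hdiff : j (K uδα) - j (K udag) = j (K e) := by simp only [e, map_sub]
    simpa only [hdiff, real_inner_self_eq_norm_sq] using hopt e
  refine EReal.coe_le_inv_mul_of_coe_mul_le (by linarith) ?_
  calc _ = (((-(‖j (K e)‖ ^ 2 / (2 * α)) - μdag e - ζ1 * (C * (μδα - μdag) e))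
          + δ / α * (-(‖j (K (-e))‖ ^ 2 / (2 * δ)) - (n.comp K) (-e)
            - ζ2 * (C * (μδα - μdag) e)) : ℝ) : EReal) := by
        congr 1
        simp only [map_neg, norm_neg, ContinuousLinearMap.comp_apply, sub_apply]
        field_simp
        linear_combination 2 * hbal
    _ ≤ _ := by
        rw [EReal.coe_add, EReal.coe_mul]
        have hδα : (0 : EReal) ≤ ((δ / α : ℝ) : EReal) := by exact_mod_cast (div_pos hδ hα).le
        exact add_le_add he1 (mul_le_mul_of_nonneg_left he2 hδα)

/-- Theorem 2.9 (case `θ = 1`): under (R1)-(R4) and the Bregman scaling condition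
`R(u−v) ≤ C_1(u,v) D(u,v)`, the symmetric Bregman distance satisfies
`D(u^δ_α,u†) ≤ inf_{(ζ1,ζ2) ∈ Σ} (e_{α,ζ1}(μ†) + (δ/α) e_{δ,ζ2}(η)) / (1 − (ζ1 + (δ/α)ζ2) C_1(u^δ_α,u†))`,
where `Σ = {(ζ1,ζ2) ∈ (0,∞)² : (ζ1 + (δ/α)ζ2) C_1(u^δ_α,u†) < 1}`. -/
theorem stmt6
    {X Y Z : Type*}
    [NormedAddCommGroup X] [NormedSpace ℝ X] [CompleteSpace X]
    [TopologicalSpace.SeparableSpace X]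
    [NormedAddCommGroup Y] [InnerProductSpace ℝ Y] [CompleteSpace Y]
    [NormedAddCommGroup Z] [NormedSpace ℝ Z]
    (j : Z →L[ℝ] Y) (hjinj : Function.Injective j) (hjdense : DenseRange j)
    (K : X →L[ℝ] Z)
    (R : X → EReal)
    -- convexity of `R`
    (hRconv : ∀ u v : X, ∀ t : ℝ, 0 ≤ t → t ≤ 1 →
      R (t • u + (1 - t) • v) ≤ (t : EReal) * R u + ((1 - t : ℝ) : EReal) * R v)
    -- (R1)+(R2): there is a topology `τ` on `X` in which `K` is continuous, `R` is
    -- sequentially lower semicontinuous, and sublevel sets of `R` are sequentially compact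
    (hR12 : ∃ τ : TopologicalSpace X,
      (@Continuous X Z τ _ fun u => K u) ∧
      (∀ (u : ℕ → X) (x : X),
        Filter.Tendsto u Filter.atTop (@nhds X τ x) →
        R x ≤ Filter.liminf (fun k => R (u k)) Filter.atTop) ∧
      (∀ ρ : ℝ, @IsSeqCompact X τ {u : X | R u ≤ (ρ : EReal)}))
    -- (R3): the convex conjugate `R*` is finite on a ball around `0` in `X*`
    (hR3 : ∃ ε : ℝ, 0 < ε ∧ ∀ q : X →L[ℝ] ℝ, ‖q‖ ≤ ε → conjR R q < ⊤)
    -- (R4): symmetry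
    (hR4 : ∀ u : X, R (-u) = R u)
    (udag : X) (n : Z →L[ℝ] ℝ) (δ α : ℝ) (hδ : 0 < δ) (hα : 0 < α)
    -- `μ† ∈ ∂R(u†)`
    (μdag : X →L[ℝ] ℝ)
    (hμdag : ∀ v : X, R udag + ((μdag (v - udag) : ℝ) : EReal) ≤ R v)
    -- `u^δ_α` is a minimizer of `J^δ_α` and `μ^δ_α ∈ ∂R(u^δ_α)` satisfies the
    -- optimality condition `K*(K u^δ_α − f^δ) + α μ^δ_α = 0`
    (uδα : X) (μδα : X →L[ℝ] ℝ)
    (hmin : ∀ u : X, Jfun j K R udag n δ α uδα ≤ Jfun j K R udag n δ α u)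
    (hsub : ∀ v : X, R uδα + ((μδα (v - uδα) : ℝ) : EReal) ≤ R v)
    (hopt : ∀ u : X,
      ⟪j (K u), j (K uδα) - j (K udag)⟫ - δ * n (K u) + α * μδα u = 0)
    -- Bregman scaling condition with exponent `θ = 1`
    (C1 : X → X → ℝ) (hC1 : ∀ u v : X, 0 ≤ C1 u v)
    (hscal : ∀ (u v : X) (μu μv : X →L[ℝ] ℝ),
      (∀ x : X, R u + ((μu (x - u) : ℝ) : EReal) ≤ R x) →
      (∀ x : X, R v + ((μv (x - v) : ℝ) : EReal) ≤ R x) →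
      R (u - v) ≤ ((C1 u v * ((μu - μv) (u - v)) : ℝ) : EReal)) :
    ((((μδα - μdag) (uδα - udag)) : ℝ) : EReal)
      ≤ ⨅ (ζ1 : ℝ) (_ : 0 < ζ1) (ζ2 : ℝ) (_ : 0 < ζ2)
          (_ : (ζ1 + δ / α * ζ2) * C1 uδα udag < 1),
          (((1 - (ζ1 + δ / α * ζ2) * C1 uδα udag)⁻¹ : ℝ) : EReal)
            * (efun j K R α ζ1 μdag
              + ((δ / α : ℝ) : EReal) * efun j K R δ ζ2 (n.comp K)) :=
  stmt6_general j K R hR4 udag n δ α hδ hα μdag hμdag uδα μδα hsub hopt C1 hscal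
end

section
/- Let R(u) = (1/p)‖u‖^p_X with 1 < p < ∞ and q = p/(p−1), and suppose the distance function decays polynomially: d_ρ(μ†) = inf{ ‖K*w − μ†‖_{X*} : w ∈ Y, ‖w‖_Y ≤ ρ } ≤ ρ^{−k} for all ρ > 0, with some k > 0. Then there is a constant C > 0 (depending only on k, q) such that e_{α,ζ}(μ†) ≤ C α^{kq/(kq+2)} ζ^{−2(q−1)/(kq+2)} for all α, ζ > 0, where e_{α,ζ}(μ†) = inf_{w∈Y}[ (1/(q ζ^{q−1}))‖K*w − μ†‖^q_{X*} + (α/2)‖w‖²_Y ]. -/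
open scoped RealInnerProductSpace

/-! Take `w` of norm at most `ρ` with `‖K*w − μ†‖ ≤ 2ρ^{-k}`. Its value in the Tikhonov functional
is at most a multiple of `ζ^{1-q} ρ^{-kq} + α ρ²`, and the radius `ρ = (α ζ^{q-1})^{-1/(kq+2)}`
balances the two terms, each becoming `α^{kq/(kq+2)} ζ^{-2(q-1)/(kq+2)}`. -/

lemma exists_mem_lt_two_mul_of_sInf_le {s : Set ℝ} (hs : s.Nonempty) {ε : ℝ} (hε : 0 < ε)
    (h : sInf s ≤ ε) : ∃ r ∈ s, r < 2 * ε := by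
  obtain ⟨r, hr, hlt⟩ := Real.lt_sInf_add_pos hs hε
  exact ⟨r, hr, by linarith⟩

lemma iInf_mul_norm_rpow_add_sq_le {Y Z : Type*} [SeminormedAddCommGroup Y]
    [SeminormedAddCommGroup Z] (F : Y → Z) {c α q ρ δ : ℝ} (hc : 0 ≤ c) (hα : 0 ≤ α)
    (hq : 0 ≤ q) {w : Y} (hw : ‖w‖ ≤ ρ) (hF : ‖F w‖ ≤ δ) :
    ⨅ v, c * ‖F v‖ ^ q + α / 2 * ‖v‖ ^ 2 ≤ c * δ ^ q + α / 2 * ρ ^ 2 := by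
  have hbdd : BddBelow (Set.range fun v => c * ‖F v‖ ^ q + α / 2 * ‖v‖ ^ 2) :=
    ⟨0, by rintro _ ⟨v, rfl⟩; positivity⟩
  refine (ciInf_le hbdd w).trans ?_
  gcongr

section Balance

variable {a b m : ℝ}

lemma inv_mul_rpow_neg_balance (ha : 0 < a) (hb : 0 < b) (hm : m + 2 ≠ 0) :
    b⁻¹ * ((a * b) ^ (-(1 / (m + 2)))) ^ (-m) = a ^ (m / (m + 2)) * b ^ (-(2 / (m + 2))) := by
  have hexp_a : -(1 / (m + 2)) * -m = m / (m + 2) := by ring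
  have hexp_b : -1 + m / (m + 2) = -(2 / (m + 2)) := by field_simp; ring
  rw [← Real.rpow_mul (by positivity), hexp_a, Real.mul_rpow ha.le hb.le, mul_left_comm,
    ← Real.rpow_neg_one b, ← Real.rpow_add hb, hexp_b]

lemma mul_rpow_sq_balance (ha : 0 < a) (hb : 0 < b) (hm : m + 2 ≠ 0) :
    a * ((a * b) ^ (-(1 / (m + 2)))) ^ 2 = a ^ (m / (m + 2)) * b ^ (-(2 / (m + 2))) := by
  have hexp_a : -(1 / (m + 2)) * 2 + 1 = m / (m + 2) := by field_simp; ring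
  have hexp_b : -(1 / (m + 2)) * 2 = -(2 / (m + 2)) := by ring
  rw [← Real.rpow_two, ← Real.rpow_mul (by positivity), Real.mul_rpow ha.le hb.le, ← mul_assoc,
    mul_comm a, ← Real.rpow_add_one ha.ne', hexp_a, hexp_b]

end Balance

/-- Remark 3.12: polynomial decay of the distance function
`d_ρ(μ†) = inf{‖K*w − μ†‖ : ‖w‖ ≤ ρ} ≤ ρ^{−k}` implies the bound
`e_{α,ζ}(μ†) = inf_w [(1/(qζ^{q−1}))‖K*w − μ†‖^q + (α/2)‖w‖²]
  ≤ C α^{kq/(kq+2)} ζ^{−2(q−1)/(kq+2)}` with `C = C(k,q)`. Here `K : X → Y` is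
bounded linear into a Hilbert space and `K*w = (u ↦ ⟪w, Ku⟫)`. -/
theorem stmt14
    {X Y : Type*} [NormedAddCommGroup X] [NormedSpace ℝ X]
    [NormedAddCommGroup Y] [InnerProductSpace ℝ Y]
    (K : X →L[ℝ] Y) (μdag : X →L[ℝ] ℝ)
    (p q k : ℝ) (hp : 1 < p) (hq : q = p / (p - 1)) (hk : 0 < k)
    -- polynomial decay of the distance function
    (hdist : ∀ ρ : ℝ, 0 < ρ →
      sInf {r : ℝ | ∃ w : Y, ‖w‖ ≤ ρ ∧ r = ‖(innerSL ℝ w).comp K - μdag‖}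
        ≤ ρ ^ (-k)) :
    ∃ C : ℝ, 0 < C ∧ ∀ α ζ : ℝ, 0 < α → 0 < ζ →
      (⨅ w : Y, (1 / (q * ζ ^ (q - 1)) * ‖(innerSL ℝ w).comp K - μdag‖ ^ q
          + α / 2 * ‖w‖ ^ 2))
        ≤ C * α ^ (k * q / (k * q + 2)) * ζ ^ (-(2 * (q - 1) / (k * q + 2))) := by
  have hq0 : 0 < q := by rw [hq]; exact div_pos (by linarith) (by linarith)
  refine ⟨2 ^ q / q + 1 / 2, by positivity, fun α ζ hα hζ => ?_⟩
  set b := ζ ^ (q - 1)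
  have hb : 0 < b := by positivity
  set ρ := (α * b) ^ (-(1 / (k * q + 2)))
  have hρ : 0 < ρ := by positivity
  have hne : {r : ℝ | ∃ w : Y, ‖w‖ ≤ ρ ∧ r = ‖(innerSL ℝ w).comp K - μdag‖}.Nonempty :=
    ⟨_, 0, by simpa using hρ.le, rfl⟩
  obtain ⟨_, ⟨w, hw, rfl⟩, hres⟩ :=
    exists_mem_lt_two_mul_of_sInf_le hne (by positivity) (hdist ρ hρ)
  calc _ ≤ 1 / (q * b) * (2 * ρ ^ (-k)) ^ q + α / 2 * ρ ^ 2 :=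
        iInf_mul_norm_rpow_add_sq_le _ (by positivity) hα.le hq0.le hw hres.le
    _ = 2 ^ q / q * (b⁻¹ * ρ ^ (-(k * q))) + 1 / 2 * (α * ρ ^ 2) := by
        rw [Real.mul_rpow zero_le_two (by positivity), ← Real.rpow_mul hρ.le]
        field_simp
    _ = (2 ^ q / q + 1 / 2) * (α ^ (k * q / (k * q + 2)) * b ^ (-(2 / (k * q + 2)))) := by
        rw [inv_mul_rpow_neg_balance hα hb (by positivity), mul_rpow_sq_balance hα hb (by positivity)]
        ring
    _ = _ := by
        rw [← Real.rpow_mul hζ.le,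
          show (q - 1) * -(2 / (k * q + 2)) = -(2 * (q - 1) / (k * q + 2)) by ring]
        ring
end

section
/- Let H1, H2 be Hilbert spaces, K : H1 → H2 a bounded linear operator, β > 0 and n ∈ H2. Then K*K + βI is invertible on H1, the functional w ↦ ‖K*w − K*n‖²_{H1} + β‖w‖²_{H2} over w ∈ H2 is minimized by W = K (K*K + βI)^{−1} K* n, and its infimum equals β ⟨n, K (K*K + βI)^{−1} K* n⟩_{H2}. -/
open scoped RealInnerProductSpace

/-!
For `β > 0` the operator `A = K*K + βI` satisfies `⟪A x, x⟫ = ‖K x‖² + β‖x‖² ≥ β‖x‖²`, so it is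
coercive and Lax–Milgram inverts it. Put `W = K A⁻¹ K* n`; then `K (K* W - K* n) + β W = 0`, the
normal equation of the Tikhonov functional `J w = ‖K* w - K* n‖² + β‖w‖²`. It makes the cross term
vanish in `J w = J W + ‖K* (w - W)‖² + β‖w - W‖²`, so `W` is the minimizer, and tested against
`W - n` it gives `J W = β ⟪n, W⟫`.
-/

section

variable {E F : Type*} [NormedAddCommGroup E] [InnerProductSpace ℝ E]
  [NormedAddCommGroup F] [InnerProductSpace ℝ F]

theorem ContinuousLinearMap.exists_continuousLinearEquiv_of_coercive [CompleteSpace E]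
    (A : E →L[ℝ] E) {c : ℝ} (hc : 0 < c) (hA : ∀ x, c * ‖x‖ * ‖x‖ ≤ ⟪A x, x⟫) :
    ∃ e : E ≃L[ℝ] E, (e : E →L[ℝ] E) = A := by
  have coercive : IsCoercive ((innerSL ℝ).comp A) := ⟨c, hc, hA⟩
  refine ⟨coercive.continuousLinearEquivOfBilin, ?_⟩
  ext x
  exact ext_inner_right ℝ (coercive.continuousLinearEquivOfBilin_apply x)

def tikhonovFunctional (L : E →L[ℝ] F) (y : F) (β : ℝ) (w : E) : ℝ :=
  ‖L w - y‖ ^ 2 + β * ‖w‖ ^ 2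

theorem tikhonovFunctional_eq_add {L : E →L[ℝ] F} {y : F} {β : ℝ} {W : E}
    (hW : ∀ v, ⟪L W - y, L v⟫ + β * ⟪W, v⟫ = 0) (w : E) :
    tikhonovFunctional L y β w
      = tikhonovFunctional L y β W + (‖L (w - W)‖ ^ 2 + β * ‖w - W‖ ^ 2) := by
  have hL : L w - y = (L W - y) + L (w - W) := by rw [map_sub]; abel
  have hw : w = W + (w - W) := by abel
  rw [tikhonovFunctional, tikhonovFunctional, hL, hw, norm_add_sq_real, norm_add_sq_real,
    add_sub_cancel_left]
  linear_combination 2 * hW (w - W)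

theorem tikhonovFunctional_le {L : E →L[ℝ] F} {y : F} {β : ℝ} {W : E} (hβ : 0 ≤ β)
    (hW : ∀ v, ⟪L W - y, L v⟫ + β * ⟪W, v⟫ = 0) (w : E) :
    tikhonovFunctional L y β W ≤ tikhonovFunctional L y β w := by
  rw [tikhonovFunctional_eq_add hW w]
  have : 0 ≤ ‖L (w - W)‖ ^ 2 + β * ‖w - W‖ ^ 2 := by positivity
  linarith

theorem iInf_tikhonovFunctional {L : E →L[ℝ] F} {y : F} {β : ℝ} {W : E} (hβ : 0 ≤ β)
    (hW : ∀ v, ⟪L W - y, L v⟫ + β * ⟪W, v⟫ = 0) :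
    ⨅ w, tikhonovFunctional L y β w = tikhonovFunctional L y β W :=
  le_antisymm (ciInf_le ⟨_, Set.forall_mem_range.2 (tikhonovFunctional_le hβ hW)⟩ W)
    (le_ciInf (tikhonovFunctional_le hβ hW))

theorem tikhonovFunctional_map_eq_mul_inner {L : E →L[ℝ] F} {z : E} {β : ℝ} {W : E}
    (hW : ∀ v, ⟪L W - L z, L v⟫ + β * ⟪W, v⟫ = 0) :
    tikhonovFunctional L (L z) β W = β * ⟪z, W⟫ := by
  have hL : L W - L z = L (W - z) := (map_sub L W z).symm
  rw [tikhonovFunctional, ← real_inner_self_eq_norm_sq, ← real_inner_self_eq_norm_sq, hL]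
  have h1 := hW (W - z)
  rw [hL, inner_sub_right, real_inner_comm z W] at h1
  linarith

theorem inner_map_sub_add_mul_inner_eq_zero_of_adjoint [CompleteSpace E] [CompleteSpace F]
    {L : E →L[ℝ] F} {y : F} {β : ℝ} {W : E} (h : L.adjoint (L W - y) + β • W = 0) (v : E) :
    ⟪L W - y, L v⟫ + β * ⟪W, v⟫ = 0 := by
  rw [← ContinuousLinearMap.adjoint_inner_left, ← real_inner_smul_left, ← inner_add_left, h,
    inner_zero_left]

end

section

variable {H1 H2 : Type*} [NormedAddCommGroup H1] [InnerProductSpace ℝ H1] [CompleteSpace H1]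
  [NormedAddCommGroup H2] [InnerProductSpace ℝ H2] [CompleteSpace H2]

theorem ContinuousLinearMap.exists_continuousLinearEquiv_adjoint_comp_add_smul_id
    (K : H1 →L[ℝ] H2) {β : ℝ} (hβ : 0 < β) :
    ∃ e : H1 ≃L[ℝ] H1,
      (e : H1 →L[ℝ] H1) = K.adjoint.comp K + β • ContinuousLinearMap.id ℝ H1 := by
  refine ContinuousLinearMap.exists_continuousLinearEquiv_of_coercive _ hβ fun x => ?_
  have h : ⟪(K.adjoint.comp K + β • ContinuousLinearMap.id ℝ H1) x, x⟫
      = ‖K x‖ ^ 2 + β * ‖x‖ ^ 2 := by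
    simp [inner_add_left, real_inner_smul_left, ContinuousLinearMap.adjoint_inner_left]
  rw [h]
  nlinarith [sq_nonneg ‖K x‖]

end

/-- Lemma 4.2 (abstract form): for Hilbert spaces `H1, H2`, a bounded linear
`K : H1 → H2`, `β > 0` and `n ∈ H2`, the operator `K*K + βI` is boundedly invertible
(with inverse `T`), the functional `w ↦ ‖K*w − K*n‖² + β‖w‖²` on `H2` is minimized by
`W = K (K*K + βI)^{−1} K* n = K (T (K* n))`, and its infimum equals
`β ⟨n, K (K*K + βI)^{−1} K* n⟩`. -/
theorem stmt16
    {H1 H2 : Type*}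
    [NormedAddCommGroup H1] [InnerProductSpace ℝ H1] [CompleteSpace H1]
    [NormedAddCommGroup H2] [InnerProductSpace ℝ H2] [CompleteSpace H2]
    (K : H1 →L[ℝ] H2) (β : ℝ) (hβ : 0 < β) (n : H2) :
    ∃ T : H1 →L[ℝ] H1,
      ((ContinuousLinearMap.adjoint K).comp K
          + β • ContinuousLinearMap.id ℝ H1).comp T = ContinuousLinearMap.id ℝ H1 ∧
      T.comp ((ContinuousLinearMap.adjoint K).comp K
          + β • ContinuousLinearMap.id ℝ H1) = ContinuousLinearMap.id ℝ H1 ∧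
      (∀ w : H2,
        ‖ContinuousLinearMap.adjoint K (K (T (ContinuousLinearMap.adjoint K n)))
            - ContinuousLinearMap.adjoint K n‖ ^ 2
            + β * ‖K (T (ContinuousLinearMap.adjoint K n))‖ ^ 2
          ≤ ‖ContinuousLinearMap.adjoint K w - ContinuousLinearMap.adjoint K n‖ ^ 2
            + β * ‖w‖ ^ 2) ∧
      (⨅ w : H2, (‖ContinuousLinearMap.adjoint K w - ContinuousLinearMap.adjoint K n‖ ^ 2
            + β * ‖w‖ ^ 2))
        = β * ⟪n, K (T (ContinuousLinearMap.adjoint K n))⟫ := by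
  obtain ⟨e, he⟩ := K.exists_continuousLinearEquiv_adjoint_comp_add_smul_id hβ
  set u := e.symm (K.adjoint n)
  have hu : K.adjoint (K u) + β • u = K.adjoint n := by
    have h := DFunLike.congr_fun he u
    rw [ContinuousLinearEquiv.coe_coe, e.apply_symm_apply] at h
    simpa only [add_apply, ContinuousLinearMap.comp_apply, smul_apply,
      ContinuousLinearMap.id_apply] using h.symm
  have hnormal : ∀ v, ⟪K.adjoint (K u) - K.adjoint n, K.adjoint v⟫ + β * ⟪K u, v⟫ = 0 := by
    refine inner_map_sub_add_mul_inner_eq_zero_of_adjoint ?_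
    rw [ContinuousLinearMap.adjoint_adjoint, ← map_smul, ← map_add, sub_add_eq_add_sub, hu,
      sub_self, map_zero]
  refine ⟨e.symm, ?_, ?_, tikhonovFunctional_le hβ.le hnormal, ?_⟩
  · rw [← he, ContinuousLinearEquiv.coe_comp_coe_symm]
  · rw [← he, ContinuousLinearEquiv.coe_symm_comp_coe]
  · exact (iInf_tikhonovFunctional hβ.le hnormal).trans
      (tikhonovFunctional_map_eq_mul_inner hnormal)
end

section
/- Let H1, H2 be Hilbert spaces, K : H1 → H2 bounded linear, u† ∈ H1, w† ∈ H2 with u† = K*w† (exact source condition for R(u) = ½‖u‖²_{H1}), η ∈ H1 and δ, α > 0. Let u^δ_α ∈ H1 be the solution of the regularized normal equation K*K u^δ_α + α u^δ_α = K*K u† + δ η − α·0, i.e. K*(K u^δ_α − K u†) + α(u^δ_α − u†) = δη − α K*w†. Then ‖u^δ_α − u†‖²_{H1} ≤ inf_{w ∈ H2} [ (δ²/α²)‖η − K*w‖²_{H1} + (δ²/α)‖w‖²_{H2} ] + α ‖w†‖²_{H2}. -/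
/-!
Write `e = u^δ_α − u†`. Pairing the normal equation with `e` gives the energy identity
`‖Ke‖² + α‖e‖² = δ⟪η, e⟫ − α⟪w†, Ke⟫`. For any `w ∈ H2`, split `δη = δ(η − K*w) + δK*w`, so that
the right-hand side becomes `⟪δ(η − K*w), e⟫ + ⟪δw, Ke⟫ + ⟪−αw†, Ke⟫`. Young's inequality,
with weight `α` on the first term and weight `1` on the other two, absorbs `‖Ke‖²` entirely and
half of `α‖e‖²`; dividing by `α/2` and taking the infimum over `w` gives the estimate.
-/

open scoped RealInnerProductSpace

open ContinuousLinearMap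

theorem real_inner_le_weighted_young {E : Type*} [NormedAddCommGroup E] [InnerProductSpace ℝ E]
    {t : ℝ} (ht : 0 < t) (x y : E) :
    ⟪x, y⟫ ≤ ‖x‖ ^ 2 / (2 * t) + t / 2 * ‖y‖ ^ 2 := by
  have h : 0 ≤ ‖x - t • y‖ ^ 2 := sq_nonneg _
  rw [norm_sub_sq_real, real_inner_smul_right, norm_smul, mul_pow, Real.norm_eq_abs, sq_abs] at h
  rw [div_add' _ _ _ (by positivity), le_div_iff₀ (by positivity)]
  nlinarith

section Tikhonov

variable {H1 H2 : Type*}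
  [NormedAddCommGroup H1] [InnerProductSpace ℝ H1] [CompleteSpace H1]
  [NormedAddCommGroup H2] [InnerProductSpace ℝ H2] [CompleteSpace H2]

theorem tikhonov_energy_identity (K : H1 →L[ℝ] H2) {e η : H1} {wdag : H2} {δ α : ℝ}
    (heq : adjoint K (K e) + α • e = δ • η - α • adjoint K wdag) (w : H2) :
    ‖K e‖ ^ 2 + α * ‖e‖ ^ 2
      = ⟪δ • (η - adjoint K w), e⟫ + ⟪δ • w, K e⟫ + ⟪-(α • wdag), K e⟫ := by
  have h := congrArg (⟪·, e⟫) heq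
  simp only [inner_add_left, inner_sub_left, inner_neg_left, real_inner_smul_left,
    adjoint_inner_left, real_inner_self_eq_norm_sq] at h ⊢
  linarith

theorem tikhonov_error_sq_le (K : H1 →L[ℝ] H2) {e η : H1} {wdag : H2} {δ α : ℝ} (hα : 0 < α)
    (heq : adjoint K (K e) + α • e = δ • η - α • adjoint K wdag) (w : H2) :
    ‖e‖ ^ 2 ≤ δ ^ 2 / α ^ 2 * ‖η - adjoint K w‖ ^ 2 + δ ^ 2 / α * ‖w‖ ^ 2 + α * ‖wdag‖ ^ 2 := by
  have energy := tikhonov_energy_identity K heq w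
  have y₁ := real_inner_le_weighted_young hα (δ • (η - adjoint K w)) e
  have y₂ := real_inner_le_weighted_young one_pos (δ • w) (K e)
  have y₃ := real_inner_le_weighted_young one_pos (-(α • wdag)) (K e)
  simp only [norm_neg, norm_smul, mul_pow, Real.norm_eq_abs, sq_abs] at y₁ y₂ y₃
  have half : α / 2 * ‖e‖ ^ 2 ≤ α / 2 * (δ ^ 2 / α ^ 2 * ‖η - adjoint K w‖ ^ 2
      + δ ^ 2 / α * ‖w‖ ^ 2 + α * ‖wdag‖ ^ 2) := by
    have hrhs : α / 2 * (δ ^ 2 / α ^ 2 * ‖η - adjoint K w‖ ^ 2 + δ ^ 2 / α * ‖w‖ ^ 2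
        + α * ‖wdag‖ ^ 2) = δ ^ 2 * ‖η - adjoint K w‖ ^ 2 / (2 * α) + δ ^ 2 * ‖w‖ ^ 2 / 2
          + α ^ 2 * ‖wdag‖ ^ 2 / 2 := by
      field_simp
    rw [hrhs]
    linarith
  exact le_of_mul_le_mul_left half (by positivity)

end Tikhonov

theorem stmt17_general
    {H1 H2 : Type*}
    [NormedAddCommGroup H1] [InnerProductSpace ℝ H1] [CompleteSpace H1]
    [NormedAddCommGroup H2] [InnerProductSpace ℝ H2] [CompleteSpace H2]
    (K : H1 →L[ℝ] H2)
    (wdag : H2) (udag : H1)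
    (η : H1) (δ α : ℝ) (hα : 0 < α)
    (uδα : H1)
    (heq : ContinuousLinearMap.adjoint K (K uδα - K udag) + α • (uδα - udag)
        = δ • η - α • ContinuousLinearMap.adjoint K wdag) :
    ‖uδα - udag‖ ^ 2
      ≤ (⨅ w : H2, (δ ^ 2 / α ^ 2 * ‖η - ContinuousLinearMap.adjoint K w‖ ^ 2
          + δ ^ 2 / α * ‖w‖ ^ 2))
        + α * ‖wdag‖ ^ 2 := by
  rw [← map_sub] at heq
  rw [← sub_le_iff_le_add]
  exact le_ciInf fun w => sub_le_iff_le_add.mpr (tikhonov_error_sq_le K hα heq w)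

/-- The deterministic error estimate behind Theorem 4.3 (quadratic Tikhonov
regularization with large noise): if `u† = K*w†` (exact source condition for
`R = ½‖·‖²`) and `u^δ_α` solves the regularized normal equation
`K*(K u^δ_α − K u†) + α(u^δ_α − u†) = δη − α K*w†`, then
`‖u^δ_α − u†‖² ≤ inf_w [(δ²/α²)‖η − K*w‖² + (δ²/α)‖w‖²] + α‖w†‖²`. -/
theorem stmt17
    {H1 H2 : Type*}
    [NormedAddCommGroup H1] [InnerProductSpace ℝ H1] [CompleteSpace H1]
    [NormedAddCommGroup H2] [InnerProductSpace ℝ H2] [CompleteSpace H2]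
    (K : H1 →L[ℝ] H2)
    (wdag : H2) (udag : H1) (hsource : udag = ContinuousLinearMap.adjoint K wdag)
    (η : H1) (δ α : ℝ) (hδ : 0 < δ) (hα : 0 < α)
    (uδα : H1)
    (heq : ContinuousLinearMap.adjoint K (K uδα - K udag) + α • (uδα - udag)
        = δ • η - α • ContinuousLinearMap.adjoint K wdag) :
    ‖uδα - udag‖ ^ 2
      ≤ (⨅ w : H2, (δ ^ 2 / α ^ 2 * ‖η - ContinuousLinearMap.adjoint K w‖ ^ 2
          + δ ^ 2 / α * ‖w‖ ^ 2))
        + α * ‖wdag‖ ^ 2 :=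
  stmt17_general K wdag udag η δ α hα uδα heq
end

section
/- Let p, q ∈ (1, ∞) with 1/p + 1/q = 1, let (λ_j)_{j≥1} be a sequence of nonnegative real numbers with ∑_{j=1}^∞ λ_j^{1/q} < ∞, and let α > 0. Then ∑_{j=1}^∞ λ_j/(λ_j + α) ≤ p^{−1/p} α^{−1/q} ∑_{j=1}^∞ λ_j^{1/q}. In particular, the key pointwise inequality (p α^{p/q} λ)^{1/p} ≤ α + λ holds for all α, λ ≥ 0. -/
/-!
Weighted AM–GM with weights `1/p, 1/q` gives `(p λ)^{1/p} α^{1/q} ≤ λ + α/q ≤ λ + α`. Writing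
`λ = λ^{1/q} λ^{1/p}`, this bounds each term: `λ/(λ + α) ≤ p^{-1/p} α^{-1/q} λ^{1/q}`, and the
series bound follows by summing.
-/

namespace Real.HolderConjugate

variable {p q : ℝ} (hpq : p.HolderConjugate q)
include hpq

lemma one_div_add_one_div_eq_one : 1 / p + 1 / q = 1 := by
  simpa using hpq.one_div_add_one_div

lemma rpow_mul_rpow_div_mul_rpow_one_div {a l : ℝ} (ha : 0 ≤ a) (hl : 0 ≤ l) :
    (p * a ^ (p / q) * l) ^ (1 / p) = p ^ (1 / p) * a ^ (1 / q) * l ^ (1 / p) := by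
  have hexp : p / q * (1 / p) = 1 / q := by field_simp [hpq.ne_zero]
  rw [mul_rpow (by positivity [hpq.nonneg]) hl, mul_rpow hpq.nonneg (by positivity),
    ← rpow_mul ha, hexp]

lemma mul_rpow_mul_rpow_le_add {a l : ℝ} (ha : 0 ≤ a) (hl : 0 ≤ l) :
    p ^ (1 / p) * a ^ (1 / q) * l ^ (1 / p) ≤ a + l := by
  have amgm := geom_mean_le_arith_mean2_weighted hpq.one_div_nonneg hpq.symm.one_div_nonneg
    (mul_nonneg hpq.nonneg hl) ha hpq.one_div_add_one_div_eq_one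
  calc p ^ (1 / p) * a ^ (1 / q) * l ^ (1 / p) = (p * l) ^ (1 / p) * a ^ (1 / q) := by
        rw [mul_rpow hpq.nonneg hl]; ring
    _ ≤ 1 / p * (p * l) + 1 / q * a := amgm
    _ = l + a / q := by field_simp [hpq.ne_zero]
    _ ≤ a + l := by linarith [div_le_self ha hpq.symm.lt.le]

lemma div_add_le_rpow_mul_rpow_mul {l α : ℝ} (hl : 0 ≤ l) (hα : 0 < α) :
    l / (l + α) ≤ p ^ (-(1 : ℝ) / p) * α ^ (-(1 : ℝ) / q) * l ^ ((1 : ℝ) / q) := by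
  set K := p ^ (1 / p) * α ^ (1 / q)
  have hK : 0 < K := by positivity [hpq.pos]
  have hKinv : p ^ (-(1 : ℝ) / p) * α ^ (-(1 : ℝ) / q) = K⁻¹ := by
    rw [neg_div, neg_div, rpow_neg hpq.nonneg, rpow_neg hα.le, mul_inv]
  have hsplit : l = l ^ (1 / q) * l ^ (1 / p) := by
    rw [← rpow_add' hl (by rw [add_comm, hpq.one_div_add_one_div_eq_one]; exact one_ne_zero),
      add_comm, hpq.one_div_add_one_div_eq_one, rpow_one]
  have hbound : l ^ (1 / p) / (l + α) ≤ K⁻¹ := by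
    rw [div_le_iff₀ (by positivity), le_inv_mul_iff₀ hK, add_comm l]
    linarith [hpq.mul_rpow_mul_rpow_le_add hα.le hl]
  calc l / (l + α) = l ^ (1 / q) * (l ^ (1 / p) / (l + α)) := by
        nth_rw 1 [hsplit]
        rw [mul_div_assoc]
    _ ≤ l ^ (1 / q) * K⁻¹ := mul_le_mul_of_nonneg_left hbound (by positivity)
    _ = _ := by rw [hKinv, mul_comm]

end Real.HolderConjugate

theorem stmt18_general
    (p q : ℝ) (hp : 1 < p) (hpq : 1 / p + 1 / q = 1)
    (lam : ℕ → ℝ) (hlam : ∀ j, 0 ≤ lam j)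
    (hsum : Summable fun j => lam j ^ ((1 : ℝ) / q))
    (α : ℝ) (hα : 0 < α) :
    ((∑' j, lam j / (lam j + α))
      ≤ p ^ (-(1 : ℝ) / p) * α ^ (-(1 : ℝ) / q) * ∑' j, lam j ^ ((1 : ℝ) / q)) ∧
    (∀ a l : ℝ, 0 ≤ a → 0 ≤ l → (p * a ^ (p / q) * l) ^ ((1 : ℝ) / p) ≤ a + l) := by
  have hconj : p.HolderConjugate q :=
    Real.holderConjugate_iff.mpr ⟨hp, by simpa only [one_div] using hpq⟩
  refine ⟨?_, fun a l ha hl => ?_⟩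
  · have hterm := fun j => hconj.div_add_le_rpow_mul_rpow_mul (hlam j) hα
    have hsum' := hsum.mul_left (p ^ (-(1 : ℝ) / p) * α ^ (-(1 : ℝ) / q))
    calc ∑' j, lam j / (lam j + α)
        ≤ ∑' j, p ^ (-(1 : ℝ) / p) * α ^ (-(1 : ℝ) / q) * lam j ^ ((1 : ℝ) / q) :=
          (hsum'.of_nonneg_of_le (fun j => by have := hlam j; positivity) hterm).tsum_le_tsum
            hterm hsum'
      _ = _ := tsum_mul_left
  · rw [hconj.rpow_mul_rpow_div_mul_rpow_one_div ha hl]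
    exact hconj.mul_rpow_mul_rpow_le_add ha hl

/-- The effective-dimension bound of Theorem 4.4: for Hölder conjugate exponents
`p, q ∈ (1,∞)`, nonnegative `(λ_j)` with `∑ λ_j^{1/q} < ∞` and `α > 0`,
`∑ λ_j/(λ_j + α) ≤ p^{−1/p} α^{−1/q} ∑ λ_j^{1/q}`; in particular the pointwise
inequality `(p α^{p/q} λ)^{1/p} ≤ α + λ` holds for all `α, λ ≥ 0`. -/
theorem stmt18
    (p q : ℝ) (hp : 1 < p) (hq : 1 < q) (hpq : 1 / p + 1 / q = 1)
    (lam : ℕ → ℝ) (hlam : ∀ j, 0 ≤ lam j)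
    (hsum : Summable fun j => lam j ^ ((1 : ℝ) / q))
    (α : ℝ) (hα : 0 < α) :
    ((∑' j, lam j / (lam j + α))
      ≤ p ^ (-(1 : ℝ) / p) * α ^ (-(1 : ℝ) / q) * ∑' j, lam j ^ ((1 : ℝ) / q)) ∧
    (∀ a l : ℝ, 0 ≤ a → 0 ≤ l → (p * a ^ (p / q) * l) ^ ((1 : ℝ) / p) ≤ a + l) :=
  stmt18_general p q hp hpq lam hlam hsum α hα
end

section
/- Let X be a real Gaussian random variable with mean 0 and variance σ² > 0, and let D ≥ 0. Then E[ (max(|X| − D, 0))² ] ≤ σ² · exp(−D²/(2σ²)). -/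
open ProbabilityTheory

/-!
Writing `φ` for the centred Gaussian density, symmetry in `x ↦ |x|` and the shift `x ↦ x + D`
turn the expectation into `2 ∫_{x > 0} φ(x + D) x²`. Since `(x + D)² ≥ x² + D²` for `x, D ≥ 0`,
`φ(x + D) ≤ exp(-D²/(2σ²)) φ(x)`, and what remains is `2 ∫_{x > 0} φ(x) x² = E[X²] = σ²`.
-/

open MeasureTheory Real Set
open scoped NNReal

namespace ProbabilityTheory

lemma integral_sq_gaussianReal_zero (v : ℝ≥0) : ∫ x, x ^ 2 ∂gaussianReal 0 v = v := by
  rw [← variance_id_gaussianReal (μ := 0) (v := v),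
    variance_of_integral_eq_zero aemeasurable_id integral_id_gaussianReal]
  rfl

lemma integral_gaussianReal_comp_abs {v : ℝ≥0} (hv : v ≠ 0) (f : ℝ → ℝ) :
    ∫ x, f |x| ∂gaussianReal 0 v = 2 * ∫ x in Ioi 0, gaussianPDFReal 0 v x * f x := by
  rw [integral_gaussianReal_eq_integral_smul hv,
    ← integral_comp_abs (f := fun x ↦ gaussianPDFReal 0 v x * f x)]
  simp [gaussianPDFReal]

lemma setIntegral_Ioi_gaussianPDFReal_mul_sq {v : ℝ≥0} (hv : v ≠ 0) :
    ∫ x in Ioi 0, gaussianPDFReal 0 v x * x ^ 2 = v / 2 := by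
  have h := integral_gaussianReal_comp_abs hv (· ^ 2)
  simp only [sq_abs, integral_sq_gaussianReal_zero] at h
  linarith

lemma gaussianPDFReal_add_le (v : ℝ≥0) {x D : ℝ} (hx : 0 ≤ x) (hD : 0 ≤ D) :
    gaussianPDFReal 0 v (x + D) ≤ rexp (-D ^ 2 / (2 * v)) * gaussianPDFReal 0 v x := by
  simp only [gaussianPDFReal, sub_zero]
  rw [mul_left_comm, ← Real.exp_add]
  gcongr
  rw [← add_div]
  gcongr
  nlinarith [mul_nonneg hx hD]

lemma integral_gaussianPDFReal_mul_sq_posPart_sub_le {v : ℝ≥0} (hv : v ≠ 0) {D : ℝ}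
    (hD : 0 ≤ D) :
    ∫ x, gaussianPDFReal 0 v x * max (x - D) 0 ^ 2 ≤ rexp (-D ^ 2 / (2 * v)) * (v / 2) := by
  have h_half : ∫ x, gaussianPDFReal 0 v x * max x 0 ^ 2 = v / 2 := by
    rw [← setIntegral_eq_integral_of_forall_compl_eq_zero (s := Ioi 0) fun x hx ↦ by
        simp [max_eq_right (not_lt.mp (mem_Ioi.not.mp hx))],
      ← setIntegral_Ioi_gaussianPDFReal_mul_sq hv]
    exact setIntegral_congr_fun measurableSet_Ioi fun x hx ↦ by rw [max_eq_left (le_of_lt hx)]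
  have h_int : Integrable fun x ↦ gaussianPDFReal 0 v x * max x 0 ^ 2 :=
    .of_integral_ne_zero (by rw [h_half]; positivity)
  calc ∫ x, gaussianPDFReal 0 v x * max (x - D) 0 ^ 2
      = ∫ x, gaussianPDFReal 0 v (x + D) * max x 0 ^ 2 := by
        rw [← integral_add_right_eq_self _ D]
        simp only [add_sub_cancel_right]
    _ ≤ ∫ x, rexp (-D ^ 2 / (2 * v)) * (gaussianPDFReal 0 v x * max x 0 ^ 2) := by
        refine integral_mono_of_nonneg (ae_of_all _ fun x ↦ ?_) (h_int.const_mul _)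
          (ae_of_all _ fun x ↦ ?_)
        · have := gaussianPDFReal_nonneg 0 v (x + D)
          positivity
        · rcases le_total x 0 with hx | hx
          · simp [max_eq_right hx]
          · dsimp only
            rw [← mul_assoc]
            gcongr
            exact gaussianPDFReal_add_le v hx hD
    _ = rexp (-D ^ 2 / (2 * v)) * (v / 2) := by rw [integral_const_mul, h_half]

end ProbabilityTheory

/-- The Gaussian tail estimate used in the proof of Lemma 4.5: for `X ~ N(0,σ²)` with
`σ² > 0` and `D ≥ 0`, `E[(max(|X| − D, 0))²] ≤ σ² exp(−D²/(2σ²))`. -/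
theorem stmt19 (σ D : ℝ) (hσ : 0 < σ ^ 2) (hD : 0 ≤ D) :
    ∫ x, max (|x| - D) 0 ^ 2 ∂(gaussianReal 0 (σ ^ 2).toNNReal)
      ≤ σ ^ 2 * Real.exp (-D ^ 2 / (2 * σ ^ 2)) := by
  have hv : (σ ^ 2).toNNReal ≠ 0 := (Real.toNNReal_pos.mpr hσ).ne'
  have hv_coe : ((σ ^ 2).toNNReal : ℝ) = σ ^ 2 := Real.coe_toNNReal _ hσ.le
  calc ∫ x, max (|x| - D) 0 ^ 2 ∂(gaussianReal 0 (σ ^ 2).toNNReal)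
      = 2 * ∫ x in Ioi 0, gaussianPDFReal 0 (σ ^ 2).toNNReal x * max (x - D) 0 ^ 2 :=
        integral_gaussianReal_comp_abs hv fun t ↦ max (t - D) 0 ^ 2
    _ = 2 * ∫ x, gaussianPDFReal 0 (σ ^ 2).toNNReal x * max (x - D) 0 ^ 2 := by
        rw [setIntegral_eq_integral_of_forall_compl_eq_zero fun x hx ↦ by
          simp [max_eq_right (by linarith [not_lt.mp (mem_Ioi.not.mp hx)] : x - D ≤ 0)]]
    _ ≤ 2 * (rexp (-D ^ 2 / (2 * σ ^ 2)) * (σ ^ 2 / 2)) := by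
        gcongr
        simpa only [hv_coe] using integral_gaussianPDFReal_mul_sq_posPart_sub_le hv hD
    _ = σ ^ 2 * Real.exp (-D ^ 2 / (2 * σ ^ 2)) := by ring
end
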